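/- For a cone in ℝ³ with a centrally symmetric convex base K and apex v, the volume of the cone equals 4/7 times the volume of its difference body DC = (1/2)(C - C), where C = conv(K ∪ {v}). -/

import Mathlib

/-!
In coordinates `W × ℝ` with `W = H.direction`, centred at the centre of symmetry `c`, the base
becomes `K₀ × {0}` with `-K₀ = K₀` and the apex becomes `(0, 1)`. The cone `C` then has slices
`(1 - t) • K₀`, `t ∈ [0, 1]`, and `C - C` has slices `(2 - |u|) • K₀`, `|u| ≤ 1`, because
`(1 - t₁) • K₀ - (1 - t₂) • K₀ = (2 - t₁ - t₂) • K₀` for a symmetric convex `K₀`. By Fubini,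
`|C| = |K₀| ∫₀¹ (1 - t)ⁿ dt = |K₀| / (n + 1)` and
`|C - C| = |K₀| ∫₋₁¹ (2 - |u|)ⁿ du = 2 (2ⁿ⁺¹ - 1) |K₀| / (n + 1)`, where `n = dim W`, so
`|C| / |(C - C) / 2| = 2ⁿ / (2ⁿ⁺¹ - 1)`, which is `4 / 7` for `n = 2`. The change of coordinates
multiplies every Haar measure by the same constant, which cancels in the ratio.
-/

open MeasureTheory Pointwise Set Module
open scoped ENNReal

section ScaledStack

variable {E : Type*} [AddCommGroup E] [Module ℝ E]

def scaledStack (I : Set ℝ) (r : ℝ → ℝ) (K : Set E) : Set (E × ℝ) :=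
  {p | p.2 ∈ I ∧ p.1 ∈ r p.2 • K}

abbrev coneSet (K : Set E) : Set (E × ℝ) := scaledStack (Icc 0 1) (fun t => 1 - t) K

abbrev diffSet (K : Set E) : Set (E × ℝ) := scaledStack (Icc (-1) 1) (fun t => 2 - |t|) K

@[simp]
theorem mem_scaledStack {I : Set ℝ} {r : ℝ → ℝ} {K : Set E} {x : E} {t : ℝ} :
    (x, t) ∈ scaledStack I r K ↔ t ∈ I ∧ x ∈ r t • K :=
  Iff.rfl

theorem Convex.smul_subset_smul_of_le {K : Set E} (hK : Convex ℝ K) (h0 : (0 : E) ∈ K)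
    {a b : ℝ} (ha : 0 ≤ a) (hab : a ≤ b) : a • K ⊆ b • K := by
  rw [show b = a + (b - a) by ring, hK.add_smul ha (sub_nonneg.2 hab)]
  exact subset_add_left _ (zero_mem_smul_set h0)

theorem convexHull_prod_zero_union_apex {K : Set E} (hK : Convex ℝ K) (hne : K.Nonempty) :
    convexHull ℝ (K ×ˢ {0} ∪ {((0 : E), (1 : ℝ))}) = coneSet K := by
  rw [(hK.prod (convex_singleton 0)).convexHull_union (convex_singleton _)
    (hne.prod (singleton_nonempty 0)) (singleton_nonempty _), convexJoin_singleton_right]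
  ext ⟨x, t⟩
  simp only [mem_iUnion, mem_prod, mem_singleton_iff, exists_prop, Prod.exists, segment_eq_image,
    mem_image, mem_scaledStack, mem_smul_set]
  constructor
  · rintro ⟨y, _, ⟨hy, rfl⟩, θ, hθ, hyθ⟩
    obtain ⟨rfl, rfl⟩ : (1 - θ) • y = x ∧ θ = t := by simpa using hyθ
    exact ⟨hθ, y, hy, rfl⟩
  · rintro ⟨ht, y, hy, rfl⟩
    exact ⟨y, 0, ⟨hy, rfl⟩, t, ht, by simp⟩

theorem coneSet_sub_coneSet {K : Set E} (hK : Convex ℝ K) (h0 : (0 : E) ∈ K) (hsym : -K = K) :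
    coneSet K - coneSet K = diffSet K := by
  have neg_mem {y : E} (hy : y ∈ K) : -y ∈ K := hsym ▸ neg_mem_neg.2 hy
  ext ⟨x, u⟩
  simp only [mem_sub, Prod.exists, mem_scaledStack, Prod.mk_sub_mk, Prod.mk.injEq]
  constructor
  · rintro ⟨_, t₁, ⟨⟨ht₁, ht₁'⟩, y₁, hy₁, rfl⟩, _, t₂, ⟨⟨ht₂, ht₂'⟩, y₂, hy₂, rfl⟩, rfl, rfl⟩
    refine ⟨⟨by linarith, by linarith⟩, ?_⟩
    have hsum : (1 - t₁) • y₁ - (1 - t₂) • y₂ ∈ ((1 - t₁) + (1 - t₂)) • K := by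
      rw [hK.add_smul (by linarith) (by linarith)]
      exact ⟨_, smul_mem_smul_set hy₁, _, smul_mem_smul_set (neg_mem hy₂), by module⟩
    refine hK.smul_subset_smul_of_le h0 (by linarith) ?_ hsum
    linarith [abs_sub_le_iff.2 (⟨by linarith, by linarith⟩ : t₁ - t₂ ≤ t₁ + t₂ ∧ t₂ - t₁ ≤ t₁ + t₂)]
  · rintro ⟨⟨hu, hu'⟩, y, hy, rfl⟩
    rcases le_total 0 u with hu₀ | hu₀
    · refine ⟨(1 - u) • y, u, ⟨⟨hu₀, by linarith⟩, y, hy, rfl⟩,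
        -y, 0, ⟨⟨le_rfl, zero_le_one⟩, -y, neg_mem hy, by simp⟩, ?_, sub_zero u⟩
      rw [abs_of_nonneg hu₀]
      module
    · refine ⟨y, 0, ⟨⟨le_rfl, zero_le_one⟩, y, hy, by simp⟩,
        (1 + u) • -y, -u, ⟨⟨by linarith, by linarith⟩, -y, neg_mem hy, by simp⟩, ?_, by ring⟩
      rw [abs_of_nonpos hu₀]
      module

theorem isCompact_scaledStack [TopologicalSpace E] [ContinuousSMul ℝ E] {K : Set E}
    (hK : IsCompact K) {I : Set ℝ} (hI : IsCompact I) {r : ℝ → ℝ}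
    (hr : Continuous r) : IsCompact (scaledStack I r K) := by
  have : scaledStack I r K = (fun p : E × ℝ => (r p.2 • p.1, p.2)) '' K ×ˢ I := by
    ext ⟨x, t⟩
    simp only [mem_scaledStack, mem_smul_set, mem_image, mem_prod, Prod.mk.injEq]
    constructor
    · rintro ⟨ht, y, hy, rfl⟩
      exact ⟨(y, t), ⟨hy, ht⟩, rfl, rfl⟩
    · rintro ⟨⟨y, s⟩, ⟨hy, hs⟩, rfl, rfl⟩
      exact ⟨hs, y, hy, rfl⟩
  rw [this]
  exact (hK.prod hI).image (by fun_prop)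

end ScaledStack

theorem integral_Icc_one_sub_pow (n : ℕ) : ∫ t in Icc (0 : ℝ) 1, (1 - t) ^ n = 1 / (n + 1) := by
  rw [integral_Icc_eq_integral_Ioc, ← intervalIntegral.integral_of_le zero_le_one,
    intervalIntegral.integral_comp_sub_left (fun t => t ^ n)]
  simp [integral_pow]

theorem integral_Icc_two_sub_abs_pow (n : ℕ) :
    ∫ t in Icc (-1 : ℝ) 1, (2 - |t|) ^ n = 2 * (2 ^ (n + 1) - 1) / (n + 1) := by
  have hint (a b : ℝ) : IntervalIntegrable (fun t : ℝ => (2 - |t|) ^ n) volume a b :=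
    (by fun_prop : Continuous fun t : ℝ => (2 - |t|) ^ n).intervalIntegrable a b
  have hneg : ∫ t in (-1 : ℝ)..0, (2 - |t|) ^ n = ∫ t in (-1 : ℝ)..0, (t + 2) ^ n :=
    intervalIntegral.integral_congr fun t ht => by
      rw [uIcc_of_le (by norm_num)] at ht
      rw [abs_of_nonpos ht.2]; ring
  have hpos : ∫ t in (0 : ℝ)..1, (2 - |t|) ^ n = ∫ t in (0 : ℝ)..1, (2 - t) ^ n :=
    intervalIntegral.integral_congr fun t ht => by
      rw [uIcc_of_le zero_le_one] at ht
      rw [abs_of_nonneg ht.1]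
  rw [integral_Icc_eq_integral_Ioc, ← intervalIntegral.integral_of_le (by norm_num),
    ← intervalIntegral.integral_add_adjacent_intervals (hint _ 0) (hint 0 _), hneg, hpos,
    intervalIntegral.integral_comp_add_right (fun t => t ^ n),
    intervalIntegral.integral_comp_sub_left (fun t => t ^ n)]
  norm_num [integral_pow]
  ring

section Volume

variable {E : Type*} [NormedAddCommGroup E] [NormedSpace ℝ E] [FiniteDimensional ℝ E]
  [MeasurableSpace E] [BorelSpace E] {K : Set E}

theorem prod_volume_scaledStack (μ : Measure E) [μ.IsAddHaarMeasure] (hK : IsCompact K)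
    {I : Set ℝ} (hI : IsCompact I) {r : ℝ → ℝ} (hr : Continuous r) (hr₀ : ∀ t ∈ I, 0 ≤ r t) :
    μ.prod volume (scaledStack I r K) =
      ENNReal.ofReal (∫ t in I, r t ^ finrank ℝ E) * μ K := by
  have slice (t : ℝ) : μ ((fun x => (x, t)) ⁻¹' scaledStack I r K) =
      I.indicator (fun t => ENNReal.ofReal (r t ^ finrank ℝ E) * μ K) t := by
    by_cases ht : t ∈ I
    · simp [preimage, ht, Measure.addHaar_smul_of_nonneg μ (hr₀ t ht)]
    · simp [preimage, ht]
  rw [Measure.prod_apply_symm (isCompact_scaledStack hK hI hr).isClosed.measurableSet,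
    lintegral_congr slice, lintegral_indicator hI.measurableSet,
    lintegral_mul_const _ (hr.measurable.pow_const _).ennreal_ofReal,
    ← ofReal_integral_eq_lintegral_ofReal
      ((by fun_prop : Continuous fun t => r t ^ finrank ℝ E).continuousOn.integrableOn_compact hI)
      (ae_restrict_of_forall_mem hI.measurableSet fun t ht => pow_nonneg (hr₀ t ht) _)]

theorem prod_volume_coneSet (μ : Measure E) [μ.IsAddHaarMeasure] (hK : IsCompact K) :
    μ.prod volume (coneSet K) = ENNReal.ofReal (1 / (finrank ℝ E + 1)) * μ K := by
  rw [prod_volume_scaledStack μ hK isCompact_Icc (by fun_prop) fun t ht => sub_nonneg.2 ht.2,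
    integral_Icc_one_sub_pow]

theorem prod_volume_diffSet (μ : Measure E) [μ.IsAddHaarMeasure] (hK : IsCompact K) :
    μ.prod volume (diffSet K) =
      ENNReal.ofReal (2 * (2 ^ (finrank ℝ E + 1) - 1) / (finrank ℝ E + 1)) * μ K := by
  rw [prod_volume_scaledStack μ hK isCompact_Icc (by fun_prop)
    fun t ht => sub_nonneg.2 ((abs_le.2 ht).trans one_le_two), integral_Icc_two_sub_abs_pow]

theorem addHaar_coneSet_eq_mul_half_sub (ν : Measure (E × ℝ)) [ν.IsAddHaarMeasure]
    (hKc : IsCompact K) (hKconv : Convex ℝ K) (h0 : (0 : E) ∈ K) (hsym : -K = K) :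
    ν (coneSet K) = ENNReal.ofReal (2 ^ finrank ℝ E / (2 ^ (finrank ℝ E + 1) - 1)) *
      ν ((2⁻¹ : ℝ) • (coneSet K - coneSet K)) := by
  set n := finrank ℝ E
  have hν := ν.isAddLeftInvariant_eq_smul (Measure.addHaar.prod volume)
  have hn : (0 : ℝ) < 2 ^ (n + 1) - 1 := sub_pos.2 (one_lt_pow₀ one_lt_two n.succ_ne_zero)
  have hconst : ENNReal.ofReal (2 ^ n / (2 ^ (n + 1) - 1)) *
      (ENNReal.ofReal (2⁻¹ ^ (n + 1)) * ENNReal.ofReal (2 * (2 ^ (n + 1) - 1) / (n + 1))) =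
      ENNReal.ofReal (1 / (n + 1)) := by
    rw [← ENNReal.ofReal_mul (by positivity),
      ← ENNReal.ofReal_mul (div_nonneg (by positivity) hn.le)]
    congr 1
    field_simp
    rw [← pow_succ, ← mul_pow]
    norm_num
  rw [coneSet_sub_coneSet hKconv h0 hsym, hν, Measure.smul_apply, Measure.smul_apply,
    Measure.addHaar_smul_of_nonneg _ (by norm_num), prod_volume_coneSet _ hKc,
    prod_volume_diffSet _ hKc, finrank_prod, finrank_self, ← hconst]
  simp only [ENNReal.smul_def, smul_eq_mul]
  ring

end Volume

section ProdEquiv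

variable {𝕜 V : Type*} [Field 𝕜] [AddCommGroup V] [Module 𝕜 V] [FiniteDimensional 𝕜 V]
  (W : Submodule 𝕜 V) {w : V} (hw : w ∉ W) (hdim : finrank 𝕜 W + 1 = finrank 𝕜 V)

noncomputable def Submodule.prodEquivOfNotMem : (W × 𝕜) ≃ₗ[𝕜] V :=
  have hw₀ : w ≠ 0 := fun h => hw (h ▸ W.zero_mem)
  ((LinearEquiv.refl 𝕜 W).prodCongr (LinearEquiv.toSpanNonzeroSingleton 𝕜 V w hw₀)).trans
    (W.prodEquivOfIsCompl _ <|
      (Submodule.isCompl_iff_disjoint _ _ (by rw [finrank_span_singleton hw₀, hdim])).2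
        (Submodule.disjoint_span_singleton_of_notMem hw))

@[simp]
theorem Submodule.prodEquivOfNotMem_apply (p : W × 𝕜) :
    W.prodEquivOfNotMem hw hdim p = p.1 + p.2 • w := by
  simp [Submodule.prodEquivOfNotMem]

end ProdEquiv

theorem vadd_image_prod_zero_union_apex {V : Type*} [AddCommGroup V] [Module ℝ V]
    {W : Submodule ℝ V} {c v : V} (ψ : W × ℝ → V) (hψ : ∀ p, ψ p = p.1 + p.2 • (v - c))
    {K : Set V} (hKW : ∀ k ∈ K, k - c ∈ W) :
    c +ᵥ ψ '' (((fun x : W => c + x) ⁻¹' K) ×ˢ {0} ∪ {(0, 1)}) = K ∪ {v} := by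
  rw [image_union, vadd_set_union, image_singleton, vadd_set_singleton, hψ]
  congr 1
  · ext z
    simp only [mem_vadd_set, mem_image, mem_prod, mem_preimage, mem_singleton_iff, hψ,
      vadd_eq_add]
    constructor
    · rintro ⟨_, ⟨⟨x, _⟩, ⟨hx, rfl⟩, rfl⟩, rfl⟩
      simpa using hx
    · intro hz
      exact ⟨z - c, ⟨(⟨z - c, hKW z hz⟩, 0), ⟨by simpa using hz, rfl⟩, by simp⟩, by abel⟩
  · simp

theorem vadd_set_sub_vadd_set {G : Type*} [AddCommGroup G] (a : G) (s t : Set G) :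
    (a +ᵥ s) - (a +ᵥ t) = s - t := by
  rw [← singleton_vadd, ← singleton_vadd, vadd_eq_add, vadd_eq_add, add_sub_add_comm,
    singleton_sub_singleton, sub_self, singleton_zero, zero_add]

theorem Convex.mem_of_forall_mem_iff_two_smul_sub_mem {V : Type*} [AddCommGroup V] [Module ℝ V]
    {K : Set V} (hK : Convex ℝ K) (hne : K.Nonempty) {c : V}
    (hsym : ∀ x, x ∈ K ↔ (2 : ℝ) • c - x ∈ K) : c ∈ K := by
  obtain ⟨k, hk⟩ := hne
  convert hK hk ((hsym k).1 hk) (by norm_num : (0 : ℝ) ≤ 2⁻¹) (by norm_num : (0 : ℝ) ≤ 2⁻¹)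
    (by norm_num) using 1
  module

theorem ContinuousLinearEquiv.measure_image_eq_map_symm {G V : Type*} [AddCommGroup G]
    [Module ℝ G] [TopologicalSpace G] [MeasurableSpace G] [BorelSpace G] [AddCommGroup V]
    [Module ℝ V] [TopologicalSpace V] [MeasurableSpace V] [BorelSpace V] (ψ : G ≃L[ℝ] V)
    (μ : Measure V) (S : Set G) : μ (ψ '' S) = μ.map ψ.symm S := by
  rw [ψ.image_eq_preimage_symm]
  exact (ψ.symm.toHomeomorph.measurableEmbedding.map_apply μ S).symm

section Cone

variable {V : Type*} [NormedAddCommGroup V] [NormedSpace ℝ V] [FiniteDimensional ℝ V]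
  [MeasurableSpace V] [BorelSpace V]

theorem addHaar_convexHull_union_singleton_eq (μ : Measure V) [μ.IsAddHaarMeasure]
    {H : AffineSubspace ℝ V} (hH : finrank ℝ H.direction + 1 = finrank ℝ V) {K : Set V}
    (hKc : IsCompact K) (hKconv : Convex ℝ K) (hKH : K ⊆ H) (hne : K.Nonempty) {c : V}
    (hsym : ∀ x, x ∈ K ↔ (2 : ℝ) • c - x ∈ K) {v : V} (hv : v ∉ H) :
    μ (convexHull ℝ (K ∪ {v})) =
      ENNReal.ofReal (2 ^ finrank ℝ H.direction / (2 ^ (finrank ℝ H.direction + 1) - 1)) *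
        μ ((2⁻¹ : ℝ) • (convexHull ℝ (K ∪ {v}) - convexHull ℝ (K ∪ {v}))) := by
  have hcK : c ∈ K := hKconv.mem_of_forall_mem_iff_two_smul_sub_mem hne hsym
  have hcH : c ∈ H := hKH hcK
  set W := H.direction
  have hw : v - c ∉ W := fun h => hv (by simpa using AffineSubspace.vadd_mem_of_mem_direction h hcH)
  let ψ := (W.prodEquivOfNotMem hw hH).toContinuousLinearEquiv
  set K₀ : Set W := (fun x : W => c + x) ⁻¹' K
  have hK₀c : IsCompact K₀ :=
    ((Homeomorph.addLeft c).isClosedEmbedding.comp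
      W.closed_of_finiteDimensional.isClosedEmbedding_subtypeVal).isCompact_preimage hKc
  have hK₀conv : Convex ℝ K₀ := (hKconv.translate_preimage_right c).linear_preimage W.subtype
  have h0 : (0 : W) ∈ K₀ := by simpa [K₀] using hcK
  have hK₀sym : -K₀ = K₀ := by
    ext x
    simp only [K₀, mem_neg, mem_preimage, Submodule.coe_neg, hsym (c + -x)]
    rw [show (2 : ℝ) • c - (c + -x) = c + x by module]
  have hC : convexHull ℝ (K ∪ {v}) = c +ᵥ ψ '' coneSet K₀ := by
    rw [← vadd_image_prod_zero_union_apex ψ (by simp [ψ])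
      (fun k hk => AffineSubspace.vsub_mem_direction (hKH hk) hcH), convexHull_vadd,
      ← convexHull_prod_zero_union_apex hK₀conv ⟨0, h0⟩]
    exact congrArg (c +ᵥ ·) ((ψ : W × ℝ →ₗ[ℝ] V).image_convexHull _).symm
  have := ψ.symm.isAddHaarMeasure_map μ
  rw [hC, measure_vadd, vadd_set_sub_vadd_set, ← image_sub, ← image_smul_set,
    ψ.measure_image_eq_map_symm, ψ.measure_image_eq_map_symm]
  exact addHaar_coneSet_eq_mul_half_sub _ hK₀c hK₀conv h0 hK₀sym

end Cone

theorem cone_volume_eq_four_sevenths_diff_body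
    (H : AffineSubspace ℝ (EuclideanSpace ℝ (Fin 3)))
    (hH : Module.finrank ℝ H.direction = 2)
    (K : Set (EuclideanSpace ℝ (Fin 3)))
    (hKcompact : IsCompact K) (hKconv : Convex ℝ K)
    (hKH : K ⊆ (H : Set (EuclideanSpace ℝ (Fin 3))))
    (c : EuclideanSpace ℝ (Fin 3))
    (hsym : ∀ x, x ∈ K ↔ (2 : ℝ) • c - x ∈ K)
    (v : EuclideanSpace ℝ (Fin 3)) (hv : v ∉ H) :
    volume (convexHull ℝ (K ∪ {v})) =
      (4 / 7 : ℝ≥0∞) *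
        volume ((2⁻¹ : ℝ) • (convexHull ℝ (K ∪ {v}) - convexHull ℝ (K ∪ {v}))) := by
  rcases K.eq_empty_or_nonempty with rfl | hne
  · simp
  have hdim : finrank ℝ H.direction + 1 = finrank ℝ (EuclideanSpace ℝ (Fin 3)) := by simp [hH]
  rw [addHaar_convexHull_union_singleton_eq volume hdim hKcompact hKconv hKH hne hsym hv, hH]
  congr 1
  rw [ENNReal.ofReal_div_of_pos (by norm_num)]
  norm_num
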